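/- arXiv:1405.4002 — 2 statements merged into one kernel-verified Lean document; each statement's English description precedes it below -/
import Mathlib

section
/- The Bellman operator Γ possesses a unique fixed point in the space of bounded functions ℝ^s → ℝ, i.e. there exists a unique bounded function v : ℝ^s → ℝ with Γ(v) = v. -/
open Classical in
/-- The Kružkov-transformed Bellman operator. -/
noncomputable def bellman {s d : ℕ}
    (Om T : Set (EuclideanSpace ℝ (Fin s))) (U : Set (EuclideanSpace ℝ (Fin d)))
    (f : EuclideanSpace ℝ (Fin s) → EuclideanSpace ℝ (Fin d) → EuclideanSpace ℝ (Fin s))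
    (c : EuclideanSpace ℝ (Fin s) → EuclideanSpace ℝ (Fin d) → ℝ)
    (v : EuclideanSpace ℝ (Fin s) → ℝ) :
    EuclideanSpace ℝ (Fin s) → ℝ :=
  fun x =>
    if x ∈ T then 1
    else if x ∈ Om then
      sSup ((fun u => Real.exp (-c x u) * (if f x u ∈ T then 1 else v (f x u))) '' U)
    else 0

/-!
Γ is a contraction with constant `exp (-δ)` for the sup norm on bounded functions, because
`e^{-c(x,u)} ≤ e^{-δ}` wherever the supremum is taken, and replacing `v` by `1` on `T` does not
increase `|v - w|`. Banach's fixed point theorem in `ℓ^∞` then gives the unique fixed point.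
-/

open Set

section SupremumEstimates

variable {α : Type*} {U : Set α} {g h : α → ℝ} {ε M : ℝ}

theorem sSup_image_le_sSup_image_add (hh : BddAbove (h '' U)) (hε : 0 ≤ ε)
    (hgh : ∀ u ∈ U, g u ≤ h u + ε) : sSup (g '' U) ≤ sSup (h '' U) + ε := by
  rcases U.eq_empty_or_nonempty with rfl | hU
  · simpa using hε
  · refine csSup_le (hU.image g) (forall_mem_image.2 fun u hu => ?_)
    exact (hgh u hu).trans (add_le_add_left (le_csSup hh (mem_image_of_mem h hu)) ε)

theorem abs_sSup_image_sub_sSup_image_le (hg : BddAbove (g '' U)) (hh : BddAbove (h '' U))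
    (hε : 0 ≤ ε) (hgh : ∀ u ∈ U, |g u - h u| ≤ ε) :
    |sSup (g '' U) - sSup (h '' U)| ≤ ε := by
  refine abs_sub_le_iff.2 ⟨sub_le_iff_le_add'.2 ?_, sub_le_iff_le_add'.2 ?_⟩
  · exact sSup_image_le_sSup_image_add hh hε fun u hu => by
      linarith [(abs_le.1 (hgh u hu)).2]
  · exact sSup_image_le_sSup_image_add hg hε fun u hu => by
      linarith [(abs_le.1 (hgh u hu)).1]

theorem abs_sSup_image_le (hM : 0 ≤ M) (hg : ∀ u ∈ U, |g u| ≤ M) : |sSup (g '' U)| ≤ M := by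
  refine abs_le.2 ⟨?_, Real.sSup_le (forall_mem_image.2 fun u hu => (abs_le.1 (hg u hu)).2) hM⟩
  rcases U.eq_empty_or_nonempty with rfl | ⟨u, hu⟩
  · simpa using hM
  · have hbdd : BddAbove (g '' U) :=
      ⟨M, forall_mem_image.2 fun u hu => (abs_le.1 (hg u hu)).2⟩
    exact (abs_le.1 (hg u hu)).1.trans (le_csSup hbdd (mem_image_of_mem g hu))

end SupremumEstimates

section BoundedFunctions

variable {ι : Type*}

theorem memℓp_top_iff_exists_abs_le {v : ι → ℝ} :
    Memℓp v ⊤ ↔ ∃ M, ∀ x, |v x| ≤ M := by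
  simp only [memℓp_infty_iff, BddAbove, upperBounds, Set.Nonempty, forall_mem_range,
    Real.norm_eq_abs, mem_ofPred_eq]

theorem existsUnique_bounded_fixedPoint (Φ : (ι → ℝ) → ι → ℝ) {K : NNReal} (hK : K < 1)
    (hΦ_bdd : ∀ v, (∃ M, ∀ x, |v x| ≤ M) → ∃ M, ∀ x, |Φ v x| ≤ M)
    (hΦ_contract : ∀ v w D, (∃ M, ∀ x, |v x| ≤ M) → (∃ M, ∀ x, |w x| ≤ M) →
      (∀ x, |v x - w x| ≤ D) → ∀ x, |Φ v x - Φ w x| ≤ K * D) :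
    ∃! v : ι → ℝ, (∃ M, ∀ x, |v x| ≤ M) ∧ Φ v = v := by
  let V := lp (fun _ : ι => ℝ) ⊤
  have abs_le_norm (v : V) (x : ι) : |v x| ≤ ‖v‖ := by
    simpa using lp.norm_apply_le_norm ENNReal.top_ne_zero v x
  let Ψ : V → V := fun v =>
    ⟨Φ v, memℓp_top_iff_exists_abs_le.2 (hΦ_bdd v ⟨_, abs_le_norm v⟩)⟩
  have hΨ : ContractingWith K Ψ := by
    refine ⟨hK, LipschitzWith.of_dist_le_mul fun v w => ?_⟩
    rw [dist_eq_norm, dist_eq_norm]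
    refine lp.norm_le_of_forall_le (by positivity) fun x => ?_
    have hvw (y : ι) : |v y - w y| ≤ ‖v - w‖ := by simpa using abs_le_norm (v - w) y
    simpa using hΦ_contract v w _ ⟨_, abs_le_norm v⟩ ⟨_, abs_le_norm w⟩ hvw x
  let v₀ : V := ContractingWith.fixedPoint Ψ hΨ
  refine ⟨v₀, ⟨⟨_, abs_le_norm v₀⟩, congrArg Subtype.val hΨ.fixedPoint_isFixedPt⟩, ?_⟩
  rintro w ⟨hw, hΦw⟩
  let w' : V := ⟨w, memℓp_top_iff_exists_abs_le.2 hw⟩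
  exact congrArg Subtype.val (hΨ.fixedPoint_unique (x := w') (Subtype.ext hΦw))

end BoundedFunctions

section Piecewise

variable {β : Type*} {T : Set β} [∀ y, Decidable (y ∈ T)] {v w : β → ℝ} {y : β}

theorem abs_piecewise_one_le {M : ℝ} (hv : |v y| ≤ M) :
    |T.piecewise (1 : β → ℝ) v y| ≤ max 1 M := by
  by_cases hy : y ∈ T
  · simp [hy]
  · simpa [hy] using Or.inr hv

theorem abs_piecewise_one_sub_piecewise_one_le :
    |T.piecewise (1 : β → ℝ) v y - T.piecewise (1 : β → ℝ) w y| ≤ |v y - w y| := by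
  by_cases hy : y ∈ T <;> simp [hy]

end Piecewise

section Bellman

open Classical

variable {s d : ℕ}
  {Om T : Set (EuclideanSpace ℝ (Fin s))} {U : Set (EuclideanSpace ℝ (Fin d))}
  {f : EuclideanSpace ℝ (Fin s) → EuclideanSpace ℝ (Fin d) → EuclideanSpace ℝ (Fin s)}
  {c : EuclideanSpace ℝ (Fin s) → EuclideanSpace ℝ (Fin d) → ℝ}
  {v w : EuclideanSpace ℝ (Fin s) → ℝ} {x : EuclideanSpace ℝ (Fin s)} {δ : ℝ}

theorem bellman_of_mem_diff (hx : x ∈ Om \ T) :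
    bellman Om T U f c v x =
      sSup ((fun u => Real.exp (-c x u) * T.piecewise 1 v (f x u)) '' U) := by
  rw [bellman, if_neg hx.2, if_pos hx.1]
  rfl

theorem bellman_of_notMem_diff (hx : x ∉ Om \ T) :
    bellman Om T U f c v x = T.indicator 1 x := by
  by_cases hxT : x ∈ T
  · simp [bellman, hxT]
  · have hxOm : x ∉ Om := fun hxOm => hx ⟨hxOm, hxT⟩
    simp [bellman, hxT, hxOm]

theorem abs_exp_neg_mul_piecewise_le (hcδ : ∀ x ∈ Om \ T, ∀ u ∈ U, δ ≤ c x u)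
    (hx : x ∈ Om \ T) {u : EuclideanSpace ℝ (Fin d)} (hu : u ∈ U) {M : ℝ}
    (hv : ∀ y, |v y| ≤ M) :
    |Real.exp (-c x u) * T.piecewise 1 v (f x u)| ≤ Real.exp (-δ) * max 1 M := by
  rw [abs_mul, abs_of_pos (Real.exp_pos _)]
  exact mul_le_mul (Real.exp_le_exp.2 (neg_le_neg (hcδ x hx u hu)))
    (abs_piecewise_one_le (hv _)) (abs_nonneg _) (Real.exp_pos _).le

theorem abs_bellman_le (hδ : 0 ≤ δ) (hcδ : ∀ x ∈ Om \ T, ∀ u ∈ U, δ ≤ c x u) {M : ℝ}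
    (hv : ∀ y, |v y| ≤ M) (x : EuclideanSpace ℝ (Fin s)) :
    |bellman Om T U f c v x| ≤ max 1 M := by
  by_cases hx : x ∈ Om \ T
  · rw [bellman_of_mem_diff hx]
    refine abs_sSup_image_le (zero_le_one.trans (le_max_left _ _)) fun u hu => ?_
    calc _ ≤ Real.exp (-δ) * max 1 M := abs_exp_neg_mul_piecewise_le hcδ hx hu hv
      _ ≤ 1 * max 1 M := by gcongr; exact Real.exp_le_one_iff.2 (neg_nonpos.2 hδ)
      _ = max 1 M := one_mul _
  · rw [bellman_of_notMem_diff hx]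
    by_cases hxT : x ∈ T <;> simp [hxT]

theorem abs_bellman_sub_bellman_le (hcδ : ∀ x ∈ Om \ T, ∀ u ∈ U, δ ≤ c x u) {Mv Mw D : ℝ}
    (hv : ∀ y, |v y| ≤ Mv) (hw : ∀ y, |w y| ≤ Mw) (hvw : ∀ y, |v y - w y| ≤ D)
    (x : EuclideanSpace ℝ (Fin s)) :
    |bellman Om T U f c v x - bellman Om T U f c w x| ≤ Real.exp (-δ) * D := by
  have hD : 0 ≤ Real.exp (-δ) * D := by positivity [(abs_nonneg _).trans (hvw x)]
  by_cases hx : x ∈ Om \ T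
  · rw [bellman_of_mem_diff hx, bellman_of_mem_diff hx]
    have bddAbove_image {φ : EuclideanSpace ℝ (Fin s) → ℝ} {M : ℝ} (hφ : ∀ y, |φ y| ≤ M) :
        BddAbove ((fun u => Real.exp (-c x u) * T.piecewise 1 φ (f x u)) '' U) :=
      ⟨_, forall_mem_image.2 fun u hu =>
        (le_abs_self _).trans (abs_exp_neg_mul_piecewise_le hcδ hx hu hφ)⟩
    refine abs_sSup_image_sub_sSup_image_le (bddAbove_image hv) (bddAbove_image hw) hD
      fun u hu => ?_
    rw [← mul_sub, abs_mul, abs_of_pos (Real.exp_pos _)]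
    exact mul_le_mul (Real.exp_le_exp.2 (neg_le_neg (hcδ x hx u hu)))
      (abs_piecewise_one_sub_piecewise_one_le.trans (hvw _)) (abs_nonneg _)
      (Real.exp_pos _).le
  · rw [bellman_of_notMem_diff hx, bellman_of_notMem_diff hx, sub_self, abs_zero]
    exact hD

end Bellman

theorem bellman_unique_fixed_point_general {s d : ℕ}
    (Om T : Set (EuclideanSpace ℝ (Fin s))) (U : Set (EuclideanSpace ℝ (Fin d)))
    (f : EuclideanSpace ℝ (Fin s) → EuclideanSpace ℝ (Fin d) → EuclideanSpace ℝ (Fin s))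
    (c : EuclideanSpace ℝ (Fin s) → EuclideanSpace ℝ (Fin d) → ℝ)
    (δ : ℝ) (hδ : 0 < δ)
    (hcδ : ∀ x ∈ Om \ T, ∀ u ∈ U, δ ≤ c x u) :
    ∃! v : EuclideanSpace ℝ (Fin s) → ℝ,
      (∃ M, ∀ x, |v x| ≤ M) ∧ bellman Om T U f c v = v := by
  refine existsUnique_bounded_fixedPoint (bellman Om T U f c)
    (K := ⟨Real.exp (-δ), (Real.exp_pos _).le⟩) ?_ ?_ ?_
  · exact NNReal.coe_lt_coe.1 (Real.exp_lt_one_iff.2 (neg_lt_zero.2 hδ))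
  · rintro v ⟨M, hv⟩
    exact ⟨_, abs_bellman_le hδ.le hcδ hv⟩
  · rintro v w D ⟨Mv, hv⟩ ⟨Mw, hw⟩ hvw
    exact abs_bellman_sub_bellman_le hcδ hv hw hvw

/-- the Bellman operator possesses a unique fixed point among the
bounded functions `ℝ^s → ℝ`. -/
theorem bellman_unique_fixed_point {s d : ℕ}
    (Om T : Set (EuclideanSpace ℝ (Fin s))) (U : Set (EuclideanSpace ℝ (Fin d)))
    (hOm : IsCompact Om) (hU : IsCompact U) (hUne : U.Nonempty)
    (hT : IsCompact T) (hTOm : T ⊆ Om)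
    (f : EuclideanSpace ℝ (Fin s) → EuclideanSpace ℝ (Fin d) → EuclideanSpace ℝ (Fin s))
    (hf : ContinuousOn (fun p => f p.1 p.2) (Om ×ˢ U))
    (hfm : ∀ x ∈ Om, ∀ u ∈ U, f x u ∈ Om)
    (c : EuclideanSpace ℝ (Fin s) → EuclideanSpace ℝ (Fin d) → ℝ)
    (hc : ContinuousOn (fun p => c p.1 p.2) (Om ×ˢ U))
    (hc0 : ∀ x ∈ Om, ∀ u ∈ U, 0 ≤ c x u)
    (δ : ℝ) (hδ : 0 < δ)
    (hcδ : ∀ x ∈ Om \ T, ∀ u ∈ U, δ ≤ c x u) :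
    ∃! v : EuclideanSpace ℝ (Fin s) → ℝ,
      (∃ M, ∀ x, |v x| ≤ M) ∧ bellman Om T U f c v = v :=
  bellman_unique_fixed_point_general Om T U f c δ hδ hcδ
end

section
/- Under the hypotheses of the appendix (f : Ω × U → Ω continuously differentiable with f(0,0) = 0 and Lipschitz in the state uniformly in the control; c : Ω × U → [0,∞) twice continuously differentiable and Lipschitz in state and control with c(0,0) = 0 and c(x,u) > 0 for u ≠ 0; the system stabilizable on the compact set Ω, i.e. V(x) < ∞ for all x ∈ Ω; and a linear feedback F̄ for which the spectral radius of ∂_x f(0,0) + ∂_u f(0,0) F̄ is strictly less than 1), there exist ε₁ > 0 and L_loc > 0 such that the optimal value function V is Lipschitz continuous with constant L_loc on the ball of radius 2ε₁ around 0: |V(x) − V(y)| ≤ L_loc ‖x − y‖ for all x, y with ‖x‖, ‖y‖ < 2ε₁. -/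
/-!
Let `u` be an almost optimal control from `y`, where `V(y)` is small. Then every stage cost along
it is small, so the reference pairs `(Y_k, u_k)` stay in a ball around the origin on which `f` is
`η`-close to its linearization `D`. From a nearby `x`, apply the tracking control
`u_k + F̄ (X_k - Y_k)`: the deviation `e_k = X_k - Y_k` obeys `e_{k+1} = T e_k + O(η ‖e_k‖)` with
`T = D ∘ (id, F̄)`. As `‖T^n‖ < 1` gives `‖T^k‖ ≤ C σ^k` with `σ < 1`, variation of constants yields
`‖e_k‖ ≤ C ρ^k ‖x - y‖` for some `ρ < 1` once `η` is small. Since `c` is Lipschitz, the two costs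
differ by a geometric series, so `V(x) ≤ V(y) + L ‖x - y‖`. Tracking the equilibrium from `y = 0`
gives `V(x) ≤ L ‖x‖`, so `V` is finite and small near `0`, and exchanging `x` and `y` gives the
Lipschitz bound.
-/

open scoped ENNReal

/-- The trajectory of the discrete time control system `x_{k+1} = f(x_k, u_k)`
starting at `x₀` under the control sequence `u`. -/
def traj {s d : ℕ}
    (f : EuclideanSpace ℝ (Fin s) → EuclideanSpace ℝ (Fin d) → EuclideanSpace ℝ (Fin s))
    (x₀ : EuclideanSpace ℝ (Fin s)) (u : ℕ → EuclideanSpace ℝ (Fin d)) : ℕ → EuclideanSpace ℝ (Fin s)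
  | 0 => x₀
  | k + 1 => f (traj f x₀ u k) (u k)

/-- The optimal value function: the infimum, over all control sequences with
values in `U`, of the accumulated infinite-horizon cost. -/
noncomputable def valueFn {s d : ℕ} (U : Set (EuclideanSpace ℝ (Fin d)))
    (f : EuclideanSpace ℝ (Fin s) → EuclideanSpace ℝ (Fin d) → EuclideanSpace ℝ (Fin s))
    (c : EuclideanSpace ℝ (Fin s) → EuclideanSpace ℝ (Fin d) → ℝ)
    (x₀ : EuclideanSpace ℝ (Fin s)) : ℝ≥0∞ :=
  ⨅ (u : ℕ → EuclideanSpace ℝ (Fin d)) (_ : ∀ k, u k ∈ U),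
    ∑' k : ℕ, ENNReal.ofReal (c (traj f x₀ u k) (u k))

open scoped NNReal Topology
open Finset Metric

theorem norm_pow_mul_le {R : Type*} [NormedRing R] (a b : R) (q : ℕ) :
    ‖a ^ q * b‖ ≤ ‖a‖ ^ q * ‖b‖ := by
  induction q with
  | zero => simp
  | succ q ih =>
    calc ‖a ^ (q + 1) * b‖ = ‖a * (a ^ q * b)‖ := by rw [pow_succ', mul_assoc]
      _ ≤ ‖a‖ * (‖a‖ ^ q * ‖b‖) := (norm_mul_le _ _).trans (by gcongr)
      _ = ‖a‖ ^ (q + 1) * ‖b‖ := by ring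

theorem exists_norm_pow_le_mul_pow {R : Type*} [NormedRing R] {a : R} {n : ℕ}
    (hn : ‖a ^ n‖ < 1) : ∃ C σ : ℝ, 1 ≤ C ∧ 0 ≤ σ ∧ σ < 1 ∧ ∀ k, ‖a ^ k‖ ≤ C * σ ^ k := by
  rcases subsingleton_or_nontrivial R with hR | hR
  · exact ⟨1, 0, le_rfl, le_rfl, zero_lt_one, fun k => by simp [Subsingleton.elim (a ^ k) 0]⟩
  have hn0 : n ≠ 0 := by
    rintro rfl
    exact (one_le_norm_one R).not_gt (by simpa using hn)
  set σ : ℝ := max (‖a ^ n‖ ^ (n⁻¹ : ℝ)) 2⁻¹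
  have hσ0 : 0 < σ := lt_max_of_lt_right (by norm_num)
  have hσ1 : σ < 1 :=
    max_lt (Real.rpow_lt_one (norm_nonneg _) hn (by positivity)) (by norm_num)
  have hσn : ‖a ^ n‖ ≤ σ ^ n := by
    calc ‖a ^ n‖ = (‖a ^ n‖ ^ (n⁻¹ : ℝ)) ^ n := (Real.rpow_inv_natCast_pow (norm_nonneg _) hn0).symm
      _ ≤ σ ^ n := by gcongr; exact le_max_left _ _
  set B := ∑ r ∈ range n, ‖a ^ r‖
  refine ⟨max (B / σ ^ n) 1, σ, le_max_right _ _, hσ0.le, hσ1, fun k => ?_⟩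
  have hr : k % n < n := Nat.mod_lt _ (Nat.pos_of_ne_zero hn0)
  calc ‖a ^ k‖ = ‖(a ^ n) ^ (k / n) * a ^ (k % n)‖ := by
        rw [← pow_mul, ← pow_add, Nat.div_add_mod]
    _ ≤ ‖a ^ n‖ ^ (k / n) * ‖a ^ (k % n)‖ := norm_pow_mul_le _ _ _
    _ ≤ (σ ^ n) ^ (k / n) * B := by
        gcongr
        exact single_le_sum (fun r _ => norm_nonneg (a ^ r)) (mem_range.2 hr)
    _ = σ ^ k / σ ^ (k % n) * B := by
        rw [← pow_mul, div_mul_eq_mul_div, eq_div_iff (by positivity), mul_right_comm, ← pow_add,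
          Nat.div_add_mod]
    _ ≤ σ ^ k / σ ^ n * B := by
        gcongr σ ^ k / ?_ * B
        exact pow_le_pow_of_le_one hσ0.le hσ1.le hr.le
    _ = B / σ ^ n * σ ^ k := by ring
    _ ≤ max (B / σ ^ n) 1 * σ ^ k := by gcongr; exact le_max_left _ _

theorem eq_pow_apply_add_sum {R M : Type*} [Semiring R] [AddCommGroup M] [Module R M]
    [TopologicalSpace M] (T : M →L[R] M) (e : ℕ → M) (m : ℕ) :
    e m = (T ^ m) (e 0) + ∑ j ∈ range m, (T ^ (m - 1 - j)) (e (j + 1) - T (e j)) := by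
  set g : ℕ → M := fun i => (T ^ (m - i)) (e i)
  have hterm : ∀ j ∈ range m, (T ^ (m - 1 - j)) (e (j + 1) - T (e j)) = g (j + 1) - g j := by
    intro j hj
    have hmj : m - j = m - 1 - j + 1 := by have := mem_range.1 hj; omega
    have hmj' : m - (j + 1) = m - 1 - j := by omega
    simp only [g, map_sub, hmj, hmj', pow_succ]
    rfl
  rw [sum_congr rfl hterm, sum_range_sub]
  simp [g]

theorem norm_le_mul_pow_of_norm_sub_le {𝕜 E : Type*} [NontriviallyNormedField 𝕜]
    [NormedAddCommGroup E] [NormedSpace 𝕜 E] {T : E →L[𝕜] E} {C σ ρ η : ℝ}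
    (hC : 1 ≤ C) (hσ : 0 ≤ σ) (hη : 0 ≤ η) (hCη : C * η ≤ ρ - σ)
    (hT : ∀ k, ‖T ^ k‖ ≤ C * σ ^ k) {e : ℕ → E}
    (he : ∀ k, (∀ j ≤ k, ‖e j‖ ≤ C * ρ ^ j * ‖e 0‖) → ‖e (k + 1) - T (e k)‖ ≤ η * ‖e k‖)
    (n : ℕ) : ‖e n‖ ≤ C * ρ ^ n * ‖e 0‖ := by
  induction n using Nat.strong_induction_on with
  | _ n ih =>
  rcases n with _ | n
  · simpa using mul_le_mul_of_nonneg_right hC (norm_nonneg (e 0))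
  have hρ : 0 ≤ ρ := by nlinarith
  have hw : ∀ j ∈ range (n + 1), ‖(T ^ (n - j)) (e (j + 1) - T (e j))‖
      ≤ C * ‖e 0‖ * (C * η) * (ρ ^ j * σ ^ (n - j)) := by
    intro j hj
    have hjn : j < n + 1 := mem_range.1 hj
    calc ‖(T ^ (n - j)) (e (j + 1) - T (e j))‖ ≤ ‖T ^ (n - j)‖ * ‖e (j + 1) - T (e j)‖ :=
          (T ^ (n - j)).le_opNorm _
      _ ≤ C * σ ^ (n - j) * (η * (C * ρ ^ j * ‖e 0‖)) := by
          gcongr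
          · exact hT _
          · exact (he j fun i hi => ih i (by omega)).trans (by gcongr; exact ih j hjn)
      _ = C * ‖e 0‖ * (C * η) * (ρ ^ j * σ ^ (n - j)) := by ring
  -- Variation of constants bounds `‖e (n + 1)‖` by `C ‖e 0‖ (σ ^ (n + 1) + C η S)`, and
  -- `C η ≤ ρ - σ` turns `S (ρ - σ)` into `ρ ^ (n + 1) - σ ^ (n + 1)`.
  set S := ∑ j ∈ range (n + 1), ρ ^ j * σ ^ (n - j)
  have hS : S * (ρ - σ) = ρ ^ (n + 1) - σ ^ (n + 1) := by
    simpa using geom_sum₂_mul ρ σ (n + 1)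
  calc ‖e (n + 1)‖
      = ‖(T ^ (n + 1)) (e 0) + ∑ j ∈ range (n + 1), (T ^ (n - j)) (e (j + 1) - T (e j))‖ := by
        simpa using congrArg norm (eq_pow_apply_add_sum T e (n + 1))
    _ ≤ C * σ ^ (n + 1) * ‖e 0‖ + C * ‖e 0‖ * (C * η) * S := by
        rw [mul_sum]
        refine norm_add_le_of_le ?_ ((norm_sum_le _ _).trans (sum_le_sum hw))
        exact ((T ^ (n + 1)).le_opNorm _).trans (by gcongr; exact hT _)
    _ ≤ C * σ ^ (n + 1) * ‖e 0‖ + C * ‖e 0‖ * (ρ - σ) * S := by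
        gcongr
    _ = C * ρ ^ (n + 1) * ‖e 0‖ := by linear_combination C * ‖e 0‖ * hS

theorem ApproximatesLinearOn.norm_le_mul_pow_of_eq_sub {𝕜 E G : Type*} [NontriviallyNormedField 𝕜]
    [NormedAddCommGroup E] [NormedSpace 𝕜 E] [NormedAddCommGroup G] [NormedSpace 𝕜 G]
    {F : G → E} {D : G →L[𝕜] E} {R : ℝ} {η : ℝ≥0}
    (hF : ApproximatesLinearOn F D (ball 0 R) η) (P : E →L[𝕜] G) {C σ ρ : ℝ}
    (hC : 1 ≤ C) (hσ : 0 ≤ σ) (hρ : ρ ≤ 1) (hCη : C * (η * ‖P‖) ≤ ρ - σ)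
    (hT : ∀ k, ‖(D ∘L P) ^ k‖ ≤ C * σ ^ k) {q : ℕ → G} {e : ℕ → E}
    (hq : ∀ k, ‖q k‖ + ‖P‖ * (C * ‖e 0‖) < R)
    (he : ∀ k, e (k + 1) = F (q k + P (e k)) - F (q k)) (k : ℕ) :
    ‖e k‖ ≤ C * ρ ^ k * ‖e 0‖ := by
  refine norm_le_mul_pow_of_norm_sub_le hC hσ (by positivity) hCη hT (fun k hk => ?_) k
  have hρ0 : 0 ≤ ρ := by nlinarith [mul_nonneg (η.coe_nonneg) (norm_nonneg P)]
  have hek : ‖e k‖ ≤ C * ‖e 0‖ := by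
    rw [← mul_one (C * ‖e 0‖), mul_right_comm]
    exact (hk k le_rfl).trans (by gcongr; exact pow_le_one₀ hρ0 hρ)
  have hPe : ‖P (e k)‖ ≤ ‖P‖ * (C * ‖e 0‖) :=
    (P.le_opNorm _).trans (mul_le_mul_of_nonneg_left hek (norm_nonneg P))
  have hin : q k + P (e k) ∈ ball 0 R := by
    rw [mem_ball_zero_iff]
    exact (norm_add_le _ _).trans_lt ((add_le_add le_rfl hPe).trans_lt (hq k))
  have hq' : q k ∈ ball 0 R := by
    rw [mem_ball_zero_iff]
    exact (le_add_of_nonneg_right (by positivity)).trans_lt (hq k)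
  calc ‖e (k + 1) - (D ∘L P) (e k)‖
      = ‖F (q k + P (e k)) - F (q k) - D (q k + P (e k) - q k)‖ := by
        rw [he, add_sub_cancel_left]; rfl
    _ ≤ η * ‖q k + P (e k) - q k‖ := hF _ hin _ hq'
    _ ≤ η * ‖P‖ * ‖e k‖ := by
        rw [add_sub_cancel_left, mul_assoc]
        exact mul_le_mul_of_nonneg_left (P.le_opNorm _) η.coe_nonneg

theorem HasStrictFDerivAt.exists_ball_approximatesLinearOn {𝕜 E F : Type*}
    [NontriviallyNormedField 𝕜] [NormedAddCommGroup E] [NormedSpace 𝕜 E]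
    [NormedAddCommGroup F] [NormedSpace 𝕜 F] {f : E → F} {f' : E →L[𝕜] F} {a : E}
    (hf : HasStrictFDerivAt f f' a) {s : Set E} (hs : s ∈ 𝓝 a) {η : ℝ≥0} (hη : 0 < η) :
    ∃ R > 0, ball a R ⊆ s ∧ ApproximatesLinearOn f f' (ball a R) η := by
  obtain ⟨t, ht, hft⟩ := hf.approximates_deriv_on_nhds (Or.inr hη)
  obtain ⟨R, hR, hball⟩ := Metric.mem_nhds_iff.1 (Filter.inter_mem hs ht)
  exact ⟨R, hR, hball.trans Set.inter_subset_left,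
    hft.mono_set (hball.trans Set.inter_subset_right)⟩

theorem exists_pos_forall_lt_imp_norm_lt {X W : Type*} [TopologicalSpace X]
    [NormedAddCommGroup W] {c : X → W → ℝ} {K : Set X} {U : Set W} (hK : IsCompact K)
    (hU : IsCompact U) (hc : ContinuousOn (fun p : X × W => c p.1 p.2) (K ×ˢ U))
    (hpos : ∀ x ∈ K, ∀ u ∈ U, u ≠ 0 → 0 < c x u) {ε : ℝ} (hε : 0 < ε) :
    ∃ δ > 0, ∀ x ∈ K, ∀ u ∈ U, c x u < δ → ‖u‖ < ε := by
  have hcpt : IsCompact (K ×ˢ U ∩ {p | ε ≤ ‖p.2‖}) :=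
    (hK.prod hU).inter_right (isClosed_le continuous_const continuous_snd.norm)
  obtain ⟨δ, hδ, hle⟩ := hcpt.exists_forall_le' (hc.mono Set.inter_subset_left) (a := 0)
    fun p hp => hpos _ hp.1.1 _ hp.1.2 (norm_pos_iff.1 (hε.trans_le hp.2))
  exact ⟨δ, hδ, fun x hx u hu hlt => not_le.1 fun hεu => (hle (x, u) ⟨⟨hx, hu⟩, hεu⟩).not_gt hlt⟩

theorem exists_pos_forall_lt_imp_norm_prod_lt {E W : Type*} [NormedAddCommGroup E]
    [NormedAddCommGroup W] {c : E → W → ℝ} {K : Set E} {U : Set W} (hK : IsCompact K)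
    (hU : IsCompact U) (hc : ContinuousOn (fun p : E × W => c p.1 p.2) (K ×ˢ U))
    (hpos : ∀ x ∈ K, ∀ u ∈ U, u ≠ 0 → 0 < c x u)
    (hinf : ∀ N : Set E, N ∈ 𝓝 (0 : E) → ∃ δ > 0, ∀ x ∈ K \ N, ∀ u ∈ U, δ ≤ c x u)
    {ε : ℝ} (hε : 0 < ε) : ∃ θ > 0, ∀ x ∈ K, ∀ u ∈ U, c x u < θ → ‖(x, u)‖ < ε := by
  obtain ⟨δx, hδx, hx⟩ := hinf (ball 0 ε) (ball_mem_nhds 0 hε)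
  obtain ⟨δu, hδu, hu⟩ := exists_pos_forall_lt_imp_norm_lt hK hU hc hpos hε
  refine ⟨min δx δu, lt_min hδx hδu, fun x hxK u huU hlt => max_lt ?_ (hu x hxK u huU
    (hlt.trans_le (min_le_right _ _)))⟩
  by_contra hxε
  exact (hx x ⟨hxK, by simpa using hxε⟩ u huU).not_gt (hlt.trans_le (min_le_left _ _))

theorem lipschitzOnWith_uncurry_of_abs_sub_le {E W : Type*} [SeminormedAddCommGroup E]
    [SeminormedAddCommGroup W] {c : E → W → ℝ} {K : Set E} {U : Set W} {Lx Lu : ℝ}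
    (hx : ∀ x ∈ K, ∀ y ∈ K, ∀ u ∈ U, |c x u - c y u| ≤ Lx * ‖x - y‖)
    (hu : ∀ x ∈ K, ∀ u ∈ U, ∀ u' ∈ U, |c x u - c x u'| ≤ Lu * ‖u - u'‖) :
    LipschitzOnWith (‖Lx‖₊ + ‖Lu‖₊) (fun p : E × W => c p.1 p.2) (K ×ˢ U) := by
  refine LipschitzOnWith.of_dist_le_mul fun p hp q hq => ?_
  have h1 := hx p.1 hp.1 q.1 hq.1 p.2 hp.2
  have h2 := hu q.1 hq.1 p.2 hp.2 q.2 hq.2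
  have h3 : Lx * ‖p.1 - q.1‖ ≤ |Lx| * dist p q :=
    mul_le_mul (le_abs_self _) (by rw [← dist_eq_norm]; exact le_max_left _ _) (norm_nonneg _)
      (abs_nonneg _)
  have h4 : Lu * ‖p.2 - q.2‖ ≤ |Lu| * dist p q :=
    mul_le_mul (le_abs_self _) (by rw [← dist_eq_norm]; exact le_max_right _ _) (norm_nonneg _)
      (abs_nonneg _)
  rw [Real.dist_eq]
  push_cast
  simp only [Real.norm_eq_abs]
  calc |c p.1 p.2 - c q.1 q.2| ≤ |c p.1 p.2 - c q.1 p.2| + |c q.1 p.2 - c q.1 q.2| :=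
        abs_sub_le _ _ _
    _ ≤ (|Lx| + |Lu|) * dist p q := by linarith

theorem tsum_ofReal_le_tsum_ofReal_add {a b : ℕ → ℝ} {M ρ : ℝ} (hM : 0 ≤ M) (hρ0 : 0 ≤ ρ)
    (hρ1 : ρ < 1) (h : ∀ k, a k ≤ b k + M * ρ ^ k) :
    ∑' k, ENNReal.ofReal (a k) ≤ ∑' k, ENNReal.ofReal (b k) + ENNReal.ofReal (M / (1 - ρ)) := by
  calc ∑' k, ENNReal.ofReal (a k)
      ≤ ∑' k, (ENNReal.ofReal (b k) + ENNReal.ofReal (M * ρ ^ k)) :=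
        ENNReal.tsum_le_tsum fun k => (ENNReal.ofReal_le_ofReal (h k)).trans ENNReal.ofReal_add_le
    _ = ∑' k, ENNReal.ofReal (b k) + ∑' k, ENNReal.ofReal (M * ρ ^ k) := ENNReal.tsum_add
    _ = ∑' k, ENNReal.ofReal (b k) + ENNReal.ofReal (M / (1 - ρ)) := by
        rw [← ENNReal.ofReal_tsum_of_nonneg (fun k => by positivity)
          ((summable_geometric_of_lt_one hρ0 hρ1).mul_left M), tsum_mul_left,
          tsum_geometric_of_lt_one hρ0 hρ1, div_eq_mul_inv]

theorem exists_forall_abs_toReal_sub_le {E : Type*} [SeminormedAddCommGroup E]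
    {V : E → ℝ≥0∞} {r θ L : ℝ} (hr : 0 < r) (hθ : 0 < θ) (hL : 0 ≤ L) (hV0 : V 0 = 0)
    (hV : ∀ x y, ‖x‖ < r → ‖y‖ < r → V y < ENNReal.ofReal θ →
      V x ≤ V y + ENNReal.ofReal (L * ‖x - y‖)) :
    ∃ ε > (0 : ℝ), ∃ L' > (0 : ℝ), ∀ x y : E, ‖x‖ < 2 * ε → ‖y‖ < 2 * ε →
      |(V x).toReal - (V y).toReal| ≤ L' * ‖x - y‖ := by
  set ε := min (r / 2) (θ / (2 * (L + 1)))
  have hsmall : ∀ x : E, ‖x‖ < 2 * ε → ‖x‖ < r ∧ V x < ENNReal.ofReal θ := by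
    intro x hx
    have hxr : ‖x‖ < r := hx.trans_le (by linarith [min_le_left (r / 2) (θ / (2 * (L + 1)))])
    refine ⟨hxr, (hV x 0 hxr (by simpa using hr) (by simpa [hV0] using hθ)).trans_lt ?_⟩
    rw [hV0, zero_add, sub_zero, ENNReal.ofReal_lt_ofReal_iff hθ]
    calc L * ‖x‖ ≤ (L + 1) * ‖x‖ := by nlinarith [norm_nonneg x]
      _ < (L + 1) * (2 * (θ / (2 * (L + 1)))) :=
        mul_lt_mul_of_pos_left (hx.trans_le (by gcongr; exact min_le_right _ _)) (by positivity)
      _ = θ := by field_simp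
  have hone : ∀ x y : E, ‖x‖ < 2 * ε → ‖y‖ < 2 * ε →
      (V x).toReal ≤ (V y).toReal + (L + 1) * ‖x - y‖ := by
    intro x y hx hy
    obtain ⟨hxr, -⟩ := hsmall x hx
    obtain ⟨hyr, hyθ⟩ := hsmall y hy
    have := ENNReal.toReal_le_add (hV x y hxr hyr hyθ) hyθ.ne_top ENNReal.ofReal_ne_top
    rw [ENNReal.toReal_ofReal (by positivity)] at this
    nlinarith [norm_nonneg (x - y)]
  refine ⟨ε, by positivity, L + 1, by positivity, fun x y hx hy => abs_sub_le_iff.2 ⟨?_, ?_⟩⟩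
  · linarith [hone x y hx hy]
  · have := hone y x hy hx
    rw [norm_sub_rev] at this
    linarith

noncomputable def totalCost {s d : ℕ}
    (f : EuclideanSpace ℝ (Fin s) → EuclideanSpace ℝ (Fin d) → EuclideanSpace ℝ (Fin s))
    (c : EuclideanSpace ℝ (Fin s) → EuclideanSpace ℝ (Fin d) → ℝ)
    (x₀ : EuclideanSpace ℝ (Fin s)) (u : ℕ → EuclideanSpace ℝ (Fin d)) : ℝ≥0∞ :=
  ∑' k : ℕ, ENNReal.ofReal (c (traj f x₀ u k) (u k))

def trackingTraj {E W : Type*} [Sub E] [Add W] (f : E → W → E) (K : E → W) (Y : ℕ → E)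
    (u : ℕ → W) (x : E) : ℕ → E
  | 0 => x
  | k + 1 => f (trackingTraj f K Y u x k) (u k + K (trackingTraj f K Y u x k - Y k))

section ControlSystem

variable {s d : ℕ} {U : Set (EuclideanSpace ℝ (Fin d))} {Om : Set (EuclideanSpace ℝ (Fin s))}
  {f : EuclideanSpace ℝ (Fin s) → EuclideanSpace ℝ (Fin d) → EuclideanSpace ℝ (Fin s)}
  {c : EuclideanSpace ℝ (Fin s) → EuclideanSpace ℝ (Fin d) → ℝ}

theorem traj_trackingTraj (K : EuclideanSpace ℝ (Fin s) → EuclideanSpace ℝ (Fin d))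
    (Y : ℕ → EuclideanSpace ℝ (Fin s)) (u : ℕ → EuclideanSpace ℝ (Fin d))
    (x : EuclideanSpace ℝ (Fin s)) :
    traj f x (fun k => u k + K (trackingTraj f K Y u x k - Y k)) = trackingTraj f K Y u x := by
  funext k
  induction k with
  | zero => rfl
  | succ k ih => simp only [traj, ih, trackingTraj]

theorem traj_mem (hfm : ∀ x ∈ Om, ∀ u ∈ U, f x u ∈ Om) {x : EuclideanSpace ℝ (Fin s)}
    (hx : x ∈ Om) {u : ℕ → EuclideanSpace ℝ (Fin d)} (hu : ∀ k, u k ∈ U) (k : ℕ) :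
    traj f x u k ∈ Om := by
  induction k with
  | zero => exact hx
  | succ k ih => exact hfm _ ih _ (hu k)

theorem valueFn_le_totalCost {x : EuclideanSpace ℝ (Fin s)} {u : ℕ → EuclideanSpace ℝ (Fin d)}
    (hu : ∀ k, u k ∈ U) : valueFn U f c x ≤ totalCost f c x u :=
  iInf₂_le u hu

theorem valueFn_zero (hU : (0 : EuclideanSpace ℝ (Fin d)) ∈ U) (hf : f 0 0 = 0)
    (hc : c 0 0 = 0) : valueFn U f c 0 = 0 := by
  have htraj : ∀ k, traj f 0 (fun _ => 0) k = 0 := by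
    intro k
    induction k with
    | zero => rfl
    | succ k ih => simp only [traj, ih, hf]
  refine nonpos_iff_eq_zero.1 ((valueFn_le_totalCost fun _ => hU).trans_eq ?_)
  simp [totalCost, htraj, hc]

theorem le_valueFn_add_of_forall_totalCost_lt {y : EuclideanSpace ℝ (Fin s)} {a b θ : ℝ≥0∞}
    (hy : valueFn U f c y < θ)
    (h : ∀ u, (∀ k, u k ∈ U) → totalCost f c y u < θ → a ≤ totalCost f c y u + b) :
    a ≤ valueFn U f c y + b := by
  refine ENNReal.le_of_forall_pos_le_add fun ε hε _ => ?_
  obtain ⟨u, hu, hJ⟩ : ∃ u, (∀ k, u k ∈ U) ∧ totalCost f c y u < min θ (valueFn U f c y + ε) := by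
    simpa only [valueFn, totalCost, iInf_lt_iff, exists_prop] using
      lt_min hy (ENNReal.lt_add_right hy.ne_top (ENNReal.coe_ne_zero.2 hε.ne'))
  calc a ≤ totalCost f c y u + b := h u hu (hJ.trans_le (min_le_left _ _))
    _ ≤ valueFn U f c y + ε + b := by gcongr; exact hJ.le.trans (min_le_right _ _)
    _ = valueFn U f c y + b + ε := add_right_comm _ _ _

theorem valueFn_le_totalCost_add {K : EuclideanSpace ℝ (Fin s) →L[ℝ] EuclideanSpace ℝ (Fin d)}
    {D : EuclideanSpace ℝ (Fin s) × EuclideanSpace ℝ (Fin d) →L[ℝ] EuclideanSpace ℝ (Fin s)}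
    {R C σ ρ : ℝ} {η Lc : ℝ≥0} (hsub : ball 0 R ⊆ Om ×ˢ U)
    (hF : ApproximatesLinearOn (fun p => f p.1 p.2) D (ball 0 R) η)
    (hC : 1 ≤ C) (hσ : 0 ≤ σ) (hρ : ρ < 1)
    (hCη : C * (η * ‖(ContinuousLinearMap.id ℝ _).prod K‖) ≤ ρ - σ)
    (hT : ∀ k, ‖(D ∘L (ContinuousLinearMap.id ℝ _).prod K) ^ k‖ ≤ C * σ ^ k)
    (hc : LipschitzOnWith Lc (fun p => c p.1 p.2) (Om ×ˢ U))
    {x y : EuclideanSpace ℝ (Fin s)} {u : ℕ → EuclideanSpace ℝ (Fin d)}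
    (hq : ∀ k, ‖(traj f y u k, u k)‖ + ‖(ContinuousLinearMap.id ℝ _).prod K‖ * (C * ‖x - y‖) < R) :
    valueFn U f c x ≤ totalCost f c y u + ENNReal.ofReal
      (Lc * ‖(ContinuousLinearMap.id ℝ _).prod K‖ * C / (1 - ρ) * ‖x - y‖) := by
  set P := (ContinuousLinearMap.id ℝ (EuclideanSpace ℝ (Fin s))).prod K
  set Y := traj f y u
  set X := trackingTraj f K Y u x
  set v : ℕ → EuclideanSpace ℝ (Fin d) := fun k => u k + K (X k - Y k)
  have hρ0 : 0 ≤ ρ := by nlinarith [mul_nonneg η.coe_nonneg (norm_nonneg P)]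
  have hpq : ∀ k, ((X k, v k) : _ × _) = (Y k, u k) + P (X k - Y k) := fun k => by
    ext <;> simp [v, P]
  have hdev := hF.norm_le_mul_pow_of_eq_sub P hC hσ hρ.le hCη hT (q := fun k => (Y k, u k))
    (e := fun k => X k - Y k) hq fun k => by rw [← hpq]; rfl
  have hPe : ∀ k, ‖P (X k - Y k)‖ ≤ ‖P‖ * C * ‖x - y‖ * ρ ^ k := fun k =>
    calc ‖P (X k - Y k)‖ ≤ ‖P‖ * (C * ρ ^ k * ‖x - y‖) :=
          (P.le_opNorm _).trans (by gcongr; exact hdev k)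
      _ = ‖P‖ * C * ‖x - y‖ * ρ ^ k := by ring
  have hmem : ∀ k, (X k, v k) ∈ Om ×ˢ U ∧ (Y k, u k) ∈ Om ×ˢ U := by
    intro k
    have hPe' : ‖P (X k - Y k)‖ ≤ ‖P‖ * (C * ‖x - y‖) := by
      rw [← mul_assoc]
      exact (hPe k).trans (mul_le_of_le_one_right (by positivity) (pow_le_one₀ hρ0 hρ.le))
    refine ⟨hsub ?_, hsub ?_⟩ <;> rw [mem_ball_zero_iff]
    · rw [hpq]
      exact (norm_add_le _ _).trans_lt ((add_le_add le_rfl hPe').trans_lt (hq k))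
    · exact (le_add_of_nonneg_right (by positivity)).trans_lt (hq k)
  have hstep : ∀ k, c (X k) (v k) ≤ c (Y k) (u k) + Lc * ‖P‖ * C * ‖x - y‖ * ρ ^ k := by
    intro k
    have hdiff : ((X k, v k) : _ × _) - (Y k, u k) = P (X k - Y k) := by
      rw [hpq, add_sub_cancel_left]
    have h : |c (X k) (v k) - c (Y k) (u k)| ≤ Lc * ‖P (X k - Y k)‖ := by
      simpa only [dist_eq_norm, Real.norm_eq_abs, hdiff] using
        hc.dist_le_mul _ (hmem k).1 _ (hmem k).2
    have := mul_le_mul_of_nonneg_left (hPe k) Lc.coe_nonneg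
    linarith [le_abs_self (c (X k) (v k) - c (Y k) (u k))]
  calc valueFn U f c x ≤ totalCost f c x v := valueFn_le_totalCost fun k => (hmem k).1.2
    _ = ∑' k, ENNReal.ofReal (c (X k) (v k)) := by rw [totalCost, traj_trackingTraj]
    _ ≤ totalCost f c y u + ENNReal.ofReal (Lc * ‖P‖ * C * ‖x - y‖ / (1 - ρ)) :=
        tsum_ofReal_le_tsum_ofReal_add (by positivity) hρ0 hρ hstep
    _ = _ := by rw [div_mul_eq_mul_div]

theorem valueFn_le_valueFn_add
    {K : EuclideanSpace ℝ (Fin s) →L[ℝ] EuclideanSpace ℝ (Fin d)}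
    {D : EuclideanSpace ℝ (Fin s) × EuclideanSpace ℝ (Fin d) →L[ℝ] EuclideanSpace ℝ (Fin s)}
    {R C σ ρ θ : ℝ} {η Lc : ℝ≥0} (hsub : ball 0 R ⊆ Om ×ˢ U)
    (hF : ApproximatesLinearOn (fun p => f p.1 p.2) D (ball 0 R) η)
    (hC : 1 ≤ C) (hσ : 0 ≤ σ) (hρ : ρ < 1)
    (hCη : C * (η * ‖(ContinuousLinearMap.id ℝ _).prod K‖) ≤ ρ - σ)
    (hT : ∀ k, ‖(D ∘L (ContinuousLinearMap.id ℝ _).prod K) ^ k‖ ≤ C * σ ^ k)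
    (hc : LipschitzOnWith Lc (fun p => c p.1 p.2) (Om ×ˢ U))
    (hfm : ∀ x ∈ Om, ∀ u ∈ U, f x u ∈ Om)
    (hsmall : ∀ x ∈ Om, ∀ u ∈ U, c x u < θ → ‖(x, u)‖ < R / 2)
    {x y : EuclideanSpace ℝ (Fin s)} (hy : y ∈ Om)
    (hxy : ‖(ContinuousLinearMap.id ℝ _).prod K‖ * (C * ‖x - y‖) ≤ R / 2)
    (hVy : valueFn U f c y < ENNReal.ofReal θ) :
    valueFn U f c x ≤ valueFn U f c y + ENNReal.ofReal
      (Lc * ‖(ContinuousLinearMap.id ℝ _).prod K‖ * C / (1 - ρ) * ‖x - y‖) := by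
  refine le_valueFn_add_of_forall_totalCost_lt hVy fun u hu hJ =>
    valueFn_le_totalCost_add hsub hF hC hσ hρ hCη hT hc fun k => ?_
  have hck : c (traj f y u k) (u k) < θ :=
    (ENNReal.ofReal_lt_ofReal_iff'.1 ((ENNReal.le_tsum k).trans_lt hJ)).1
  linarith [hsmall _ (traj_mem hfm hy hu k) _ (hu k) hck]

end ControlSystem

theorem value_function_locally_lipschitz_general {s d : ℕ}
    (Om : Set (EuclideanSpace ℝ (Fin s))) (U : Set (EuclideanSpace ℝ (Fin d)))
    (hOm : IsCompact Om) (hU : IsCompact U)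
    (hOm0 : Om ∈ nhds (0 : EuclideanSpace ℝ (Fin s)))
    (hU0 : U ∈ nhds (0 : EuclideanSpace ℝ (Fin d)))
    (f : EuclideanSpace ℝ (Fin s) → EuclideanSpace ℝ (Fin d) → EuclideanSpace ℝ (Fin s))
    (hfm : ∀ x ∈ Om, ∀ u ∈ U, f x u ∈ Om)
    -- f is continuously differentiable with f(0,0) = 0
    (hf : ContDiffOn ℝ 1 (fun p : EuclideanSpace ℝ (Fin s) × EuclideanSpace ℝ (Fin d) => f p.1 p.2) (Om ×ˢ U))
    (hf00 : f 0 0 = 0)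
    -- the cost c is C², nonnegative, with c(0,0) = 0 and c(x,u) > 0 for u ≠ 0
    (c : EuclideanSpace ℝ (Fin s) → EuclideanSpace ℝ (Fin d) → ℝ)
    (hc : ContDiffOn ℝ 2 (fun p : EuclideanSpace ℝ (Fin s) × EuclideanSpace ℝ (Fin d) => c p.1 p.2) (Om ×ˢ U))
    (hc00 : c 0 0 = 0)
    (hcpos : ∀ x ∈ Om, ∀ u ∈ U, u ≠ 0 → 0 < c x u)
    -- c is Lipschitz in the state and in the control
    (Lc Lu : ℝ)
    (hclip : ∀ x ∈ Om, ∀ y ∈ Om, ∀ u ∈ U, |c x u - c y u| ≤ Lc * ‖x - y‖)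
    (hculip : ∀ x ∈ Om, ∀ u ∈ U, ∀ u' ∈ U, |c x u - c x u'| ≤ Lu * ‖u - u'‖)
    -- outside every neighborhood of 0 the cost is bounded away from 0
    (hcinf : ∀ N : Set (EuclideanSpace ℝ (Fin s)), N ∈ nhds (0 : EuclideanSpace ℝ (Fin s)) →
      ∃ δ > 0, ∀ x ∈ Om \ N, ∀ u ∈ U, δ ≤ c x u)
    -- a linear feedback whose closed-loop linearization at 0 has spectral radius < 1
    -- (equivalently, some power of it has operator norm < 1)
    (Fb : EuclideanSpace ℝ (Fin s) →L[ℝ] EuclideanSpace ℝ (Fin d))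
    (hspec : ∃ nn : ℕ,
      ‖((fderiv ℝ (fun p : EuclideanSpace ℝ (Fin s) × EuclideanSpace ℝ (Fin d) => f p.1 p.2) (0, 0)).comp
          ((ContinuousLinearMap.id ℝ (EuclideanSpace ℝ (Fin s))).prod Fb)) ^ nn‖ < 1) :
    ∃ ε₁ > (0:ℝ), ∃ Lloc > (0:ℝ), ∀ x y : EuclideanSpace ℝ (Fin s),
      ‖x‖ < 2 * ε₁ → ‖y‖ < 2 * ε₁ →
      |(valueFn U f c x).toReal - (valueFn U f c y).toReal| ≤ Lloc * ‖x - y‖ := by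
  obtain ⟨n, hn⟩ := hspec
  obtain ⟨C, σ, hC, hσ0, hσ1, hT⟩ := exists_norm_pow_le_mul_pow hn
  set P := (ContinuousLinearMap.id ℝ (EuclideanSpace ℝ (Fin s))).prod Fb
  obtain ⟨ρ, hσρ, hρ⟩ := exists_between hσ1
  obtain ⟨η, hη, hCη⟩ := exists_pos_mul_lt (sub_pos.2 hσρ) (C * ‖P‖)
  have hCη' : C * (η.toNNReal * ‖P‖) ≤ ρ - σ := by
    rw [Real.coe_toNNReal _ hη.le]; linarith [show C * (η * ‖P‖) = C * ‖P‖ * η by ring]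
  have hOU := prod_mem_nhds hOm0 hU0
  obtain ⟨R, hR, hsub, hF⟩ := ((hf.contDiffAt hOU).hasStrictFDerivAt one_ne_zero
    ).exists_ball_approximatesLinearOn hOU (Real.toNNReal_pos.2 hη)
  obtain ⟨θ, hθ, hsmall⟩ :=
    exists_pos_forall_lt_imp_norm_prod_lt hOm hU hc.continuousOn hcpos hcinf (half_pos hR)
  have hr : 0 < R / (4 * (‖P‖ * C + 1)) := by positivity
  refine exists_forall_abs_toReal_sub_le hr hθ
    (L := ((‖Lc‖₊ + ‖Lu‖₊ : ℝ≥0) : ℝ) * ‖P‖ * C / (1 - ρ))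
    (div_nonneg (by positivity) (by linarith)) (valueFn_zero (mem_of_mem_nhds hU0) hf00 hc00)
    fun x y hx hy hVy => ?_
  have hR' : R / (4 * (‖P‖ * C + 1)) ≤ R / 4 :=
    div_le_div_of_nonneg_left hR.le (by norm_num) (by nlinarith [norm_nonneg P])
  refine valueFn_le_valueFn_add hsub hF hC hσ0 hρ hCη' hT
    (lipschitzOnWith_uncurry_of_abs_sub_le hclip hculip) hfm hsmall
    (hsub (show (y, (0 : EuclideanSpace ℝ (Fin d))) ∈ ball 0 R by simp; linarith)).1 ?_ hVy
  calc ‖P‖ * (C * ‖x - y‖) ≤ (‖P‖ * C + 1) * (2 * (R / (4 * (‖P‖ * C + 1)))) := by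
        rw [← mul_assoc]
        gcongr
        · linarith
        · linarith [norm_sub_le x y]
    _ = R / 2 := by field_simp; ring

/-- under the assumptions of the appendix, there are `ε₁ > 0` and
`L_loc > 0` such that the optimal value function is Lipschitz continuous with
constant `L_loc` on the ball of radius `2ε₁` around `0`. -/
theorem value_function_locally_lipschitz {s d : ℕ}
    (Om : Set (EuclideanSpace ℝ (Fin s))) (U : Set (EuclideanSpace ℝ (Fin d)))
    (hOm : IsCompact Om) (hU : IsCompact U)
    (hOm0 : Om ∈ nhds (0 : EuclideanSpace ℝ (Fin s)))
    (hU0 : U ∈ nhds (0 : EuclideanSpace ℝ (Fin d)))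
    (f : EuclideanSpace ℝ (Fin s) → EuclideanSpace ℝ (Fin d) → EuclideanSpace ℝ (Fin s))
    (hfm : ∀ x ∈ Om, ∀ u ∈ U, f x u ∈ Om)
    -- f is continuously differentiable with f(0,0) = 0
    (hf : ContDiffOn ℝ 1 (fun p : EuclideanSpace ℝ (Fin s) × EuclideanSpace ℝ (Fin d) => f p.1 p.2) (Om ×ˢ U))
    (hf00 : f 0 0 = 0)
    -- f is Lipschitz in the state uniformly in the control
    (Lf : ℝ) (hLf : 0 ≤ Lf)
    (hflip : ∀ x ∈ Om, ∀ y ∈ Om, ∀ u ∈ U, ‖f x u - f y u‖ ≤ Lf * ‖x - y‖)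
    -- the cost c is C², nonnegative, with c(0,0) = 0 and c(x,u) > 0 for u ≠ 0
    (c : EuclideanSpace ℝ (Fin s) → EuclideanSpace ℝ (Fin d) → ℝ)
    (hc : ContDiffOn ℝ 2 (fun p : EuclideanSpace ℝ (Fin s) × EuclideanSpace ℝ (Fin d) => c p.1 p.2) (Om ×ˢ U))
    (hc0 : ∀ x ∈ Om, ∀ u ∈ U, 0 ≤ c x u)
    (hc00 : c 0 0 = 0)
    (hcpos : ∀ x ∈ Om, ∀ u ∈ U, u ≠ 0 → 0 < c x u)
    -- c is Lipschitz in the state and in the control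
    (Lc Lu : ℝ)
    (hclip : ∀ x ∈ Om, ∀ y ∈ Om, ∀ u ∈ U, |c x u - c y u| ≤ Lc * ‖x - y‖)
    (hculip : ∀ x ∈ Om, ∀ u ∈ U, ∀ u' ∈ U, |c x u - c x u'| ≤ Lu * ‖u - u'‖)
    -- outside every neighborhood of 0 the cost is bounded away from 0
    (hcinf : ∀ N : Set (EuclideanSpace ℝ (Fin s)), N ∈ nhds (0 : EuclideanSpace ℝ (Fin s)) →
      ∃ δ > 0, ∀ x ∈ Om \ N, ∀ u ∈ U, δ ≤ c x u)
    -- the system is stabilizable on all of Ω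
    (hstab : ∀ x ∈ Om, valueFn U f c x < ⊤)
    -- a linear feedback whose closed-loop linearization at 0 has spectral radius < 1
    -- (equivalently, some power of it has operator norm < 1)
    (Fb : EuclideanSpace ℝ (Fin s) →L[ℝ] EuclideanSpace ℝ (Fin d))
    (hspec : ∃ nn : ℕ,
      ‖((fderiv ℝ (fun p : EuclideanSpace ℝ (Fin s) × EuclideanSpace ℝ (Fin d) => f p.1 p.2) (0, 0)).comp
          ((ContinuousLinearMap.id ℝ (EuclideanSpace ℝ (Fin s))).prod Fb)) ^ nn‖ < 1) :
    ∃ ε₁ > (0:ℝ), ∃ Lloc > (0:ℝ), ∀ x y : EuclideanSpace ℝ (Fin s),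
      ‖x‖ < 2 * ε₁ → ‖y‖ < 2 * ε₁ →
      |(valueFn U f c x).toReal - (valueFn U f c y).toReal| ≤ Lloc * ‖x - y‖ :=
  value_function_locally_lipschitz_general Om U hOm hU hOm0 hU0 f hfm hf hf00 c hc hc00 hcpos Lc Lu
    hclip hculip hcinf Fb hspec
end
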